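/- Let γ₃(𝓑) = [[𝓑, 𝓑], 𝓑] be the third term of the lower central series of the Basilica group 𝓑, let 𝓑' = [𝓑, 𝓑] be its derived subgroup and 𝓑'' = [𝓑', 𝓑'] its second derived subgroup. Then 𝓑'' stabilises the first level of the tree X*, and ψ₁(𝓑'') = γ₃(𝓑) × γ₃(𝓑) as subgroups of Aut(X*) × Aut(X*). -/

import Mathlib

open Equiv
open scoped commutatorElement

namespace PaperDefs


/-! ### Regular rooted trees `X*` (vertices = finite words = lists) -/

variable (X : Type)

/-- The automorphism group of the regular rooted tree `X*`: permutations of the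
set of finite words preserving the prefix relation. -/
def treeAutL : Subgroup (Perm (List X)) where
  carrier := {g | ∀ v w : List X, v <+: w ↔ g v <+: g w}
  one_mem' := by intro v w; simp
  mul_mem' := by
    intro a b ha hb v w
    simpa [Equiv.Perm.mul_apply] using (hb v w).trans (ha (b v) (b w))
  inv_mem' := by
    intro a ha v w
    simpa using (ha (a⁻¹ v) (a⁻¹ w)).symm

/-- The rigid stabiliser of the vertex `v ∈ X*` in `H`. -/
def ristL (H : Subgroup (Perm (List X))) (v : List X) : Subgroup (Perm (List X)) where
  carrier := {g | g ∈ H ∧ ∀ w, ¬ v <+: w → g w = w}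
  one_mem' := ⟨H.one_mem, fun w _ => by simp⟩
  mul_mem' := by
    rintro a b ⟨haG, ha⟩ ⟨hbG, hb⟩
    refine ⟨H.mul_mem haG hbG, fun w hw => ?_⟩
    simp [Equiv.Perm.mul_apply, hb w hw, ha w hw]
  inv_mem' := by
    rintro a ⟨haG, ha⟩
    refine ⟨H.inv_mem haG, fun w hw => ?_⟩
    conv_lhs => rw [← ha w hw]
    simp

/-- The rigid stabiliser of the `n`-th level. -/
def ristLevelL (H : Subgroup (Perm (List X))) (n : ℕ) : Subgroup (Perm (List X)) :=
  ⨆ (v : List X) (_ : v.length = n), ristL X H v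

/-- Spherically transitive action on `X*`. -/
def SphTransL (G : Subgroup (Perm (List X))) : Prop :=
  ∀ v w : List X, v.length = w.length → ∃ g ∈ G, g v = w

/-- `G ≤ Aut(X*)` is a weakly branch group. -/
def IsWeaklyBranchL (G : Subgroup (Perm (List X))) : Prop :=
  G ≤ treeAutL X ∧ SphTransL X G ∧ ∀ v : List X, ristL X G v ≠ ⊥

/-- `projL X v H = φ_v(St_H(v))`: the image under the projection `φ_v` of the
stabiliser of `v` in `H`, where the subtree at `v` is identified with `X*` itself;
it consists of those `σ` for which some `g ∈ H` satisfies `g (v·w) = v·(σ w)`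
for every word `w`. -/
def projL (v : List X) (H : Subgroup (Perm (List X))) : Subgroup (Perm (List X)) where
  carrier := {σ | ∃ g ∈ H, ∀ w : List X, g (v ++ w) = v ++ σ w}
  one_mem' := ⟨1, H.one_mem, fun w => by simp⟩
  mul_mem' := by
    rintro σ τ ⟨g, hgH, hg⟩ ⟨g', hg'H, hg'⟩
    exact ⟨g * g', H.mul_mem hgH hg'H, fun w => by
      simp [Equiv.Perm.mul_apply, hg' w, hg (τ w)]⟩
  inv_mem' := by
    rintro σ ⟨g, hgH, hg⟩
    refine ⟨g⁻¹, H.inv_mem hgH, fun w => ?_⟩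
    have h1 : g (v ++ σ⁻¹ w) = v ++ w := by
      rw [hg (σ⁻¹ w)]; simp
    calc g⁻¹ (v ++ w) = g⁻¹ (g (v ++ σ⁻¹ w)) := by rw [h1]
      _ = v ++ σ⁻¹ w := Equiv.symm_apply_apply g _

/-- `G ≤ Aut(X*)` is self-similar: `G_v ≤ G` for every vertex. -/
def SelfSimilarL (G : Subgroup (Perm (List X))) : Prop :=
  ∀ v : List X, projL X v G ≤ G

/-! ### The Basilica group -/

mutual
  /-- The generator `a` of the Basilica group, as a function on words. -/
  def aF : List Bool → List Bool
    | [] => []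
    | false :: w => false :: w
    | true :: w => true :: bF w
  /-- The generator `b` of the Basilica group, as a function on words. -/
  def bF : List Bool → List Bool
    | [] => []
    | false :: w => true :: aF w
    | true :: w => false :: w
end

mutual
  /-- The inverse of `aF`. -/
  def aI : List Bool → List Bool
    | [] => []
    | false :: w => false :: w
    | true :: w => true :: bI w
  /-- The inverse of `bF`. -/
  def bI : List Bool → List Bool
    | [] => []
    | false :: w => true :: w
    | true :: w => false :: aI w
end

mutual
  theorem aI_aF : ∀ w, aI (aF w) = w
    | [] => rfl
    | false :: _ => rfl
    | true :: w => by simp [aF, aI, bI_bF w]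
  theorem bI_bF : ∀ w, bI (bF w) = w
    | [] => rfl
    | false :: w => by simp [bF, bI, aI_aF w]
    | true :: _ => rfl
end

mutual
  theorem aF_aI : ∀ w, aF (aI w) = w
    | [] => rfl
    | false :: _ => rfl
    | true :: w => by simp [aI, aF, bF_bI w]
  theorem bF_bI : ∀ w, bF (bI w) = w
    | [] => rfl
    | false :: _ => by simp [bI, bF]
    | true :: w => by simp [bI, bF, aF_aI w]
end

/-- The generator `a` of the Basilica group. -/
def aP : Perm (List Bool) := ⟨aF, aI, aI_aF, aF_aI⟩

/-- The generator `b` of the Basilica group. -/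
def bP : Perm (List Bool) := ⟨bF, bI, bI_bF, bF_bI⟩

/-- The Basilica group `𝓑 = ⟨a, b⟩ ≤ Aut({0,1}*)`. -/
def BasilicaGroup : Subgroup (Perm (List Bool)) := Subgroup.closure {aP, bP}

/-- The image of a subgroup of the first-level stabiliser under
`ψ₁ = (φ₀, φ₁)`: pairs `(σ₀, σ₁)` arising as the pair of first-level sections of
some `g ∈ H`. -/
def psi1Image (H : Subgroup (Perm (List Bool))) :
    Subgroup (Perm (List Bool) × Perm (List Bool)) where
  carrier := {p | ∃ g ∈ H, ∀ w : List Bool,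
      g (false :: w) = false :: p.1 w ∧ g (true :: w) = true :: p.2 w}
  one_mem' := ⟨1, H.one_mem, fun w => by simp⟩
  mul_mem' := by
    rintro p q ⟨g, hgH, hg⟩ ⟨g', hg'H, hg'⟩
    refine ⟨g * g', H.mul_mem hgH hg'H, fun w => ⟨?_, ?_⟩⟩
    · simp [Equiv.Perm.mul_apply, (hg' w).1, (hg (q.1 w)).1]
    · simp [Equiv.Perm.mul_apply, (hg' w).2, (hg (q.2 w)).2]
  inv_mem' := by
    rintro p ⟨g, hgH, hg⟩
    refine ⟨g⁻¹, H.inv_mem hgH, fun w => ⟨?_, ?_⟩⟩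
    · have h1 : g (false :: p.1⁻¹ w) = false :: w := by
        rw [(hg (p.1⁻¹ w)).1]; simp
      have h2 : g⁻¹ (false :: w) = false :: p.1⁻¹ w := by
        rw [← h1]; simp
      simpa using h2
    · have h1 : g (true :: p.2⁻¹ w) = true :: w := by
        rw [(hg (p.2⁻¹ w)).2]; simp
      have h2 : g⁻¹ (true :: w) = true :: p.2⁻¹ w := by
        rw [← h1]; simp
      simpa using h2


/-! ### Auxiliary development -/

section Aux

open Subgroup

local notation "P" => Perm (List Bool)
local notation "𝓑" => BasilicaGroup

/-- `g` stabilises the first level with sections `p` (at 0) and `q` (at 1). -/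
def isG (g p q : P) : Prop :=
  ∀ w, g (false :: w) = false :: p w ∧ g (true :: w) = true :: q w

/-- `g` swaps the first level with sections `p` (at 0) and `q` (at 1). -/
def isS (g p q : P) : Prop :=
  ∀ w, g (false :: w) = true :: p w ∧ g (true :: w) = false :: q w

theorem isG_one : isG 1 1 1 := fun w => by simp

theorem isG_mul {g p q h r s : P} (hg : isG g p q) (hh : isG h r s) :
    isG (g * h) (p * r) (q * s) := fun w => by
  simp [Equiv.Perm.mul_apply, (hh w).1, (hh w).2, (hg (r w)).1, (hg (s w)).2]

theorem isG_mul_isS {g p q h r s : P} (hg : isG g p q) (hh : isS h r s) :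
    isS (g * h) (q * r) (p * s) := fun w => by
  simp [Equiv.Perm.mul_apply, (hh w).1, (hh w).2, (hg (r w)).2, (hg (s w)).1]

theorem isS_mul_isG {g p q h r s : P} (hg : isS g p q) (hh : isG h r s) :
    isS (g * h) (p * r) (q * s) := fun w => by
  simp [Equiv.Perm.mul_apply, (hh w).1, (hh w).2, (hg (r w)).1, (hg (s w)).2]

theorem isS_mul_isS {g p q h r s : P} (hg : isS g p q) (hh : isS h r s) :
    isG (g * h) (q * r) (p * s) := fun w => by
  simp [Equiv.Perm.mul_apply, (hh w).1, (hh w).2, (hg (r w)).2, (hg (s w)).1]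

theorem perm_apply_inv_self (g : P) (x : List Bool) : g (g⁻¹ x) = x := by simp

theorem perm_inv_apply_self (g : P) (x : List Bool) : g⁻¹ (g x) = x := by simp

theorem isG_inv {g p q : P} (hg : isG g p q) : isG g⁻¹ p⁻¹ q⁻¹ := by
  intro w
  constructor
  · have h1 : g (false :: p⁻¹ w) = false :: w := by
      rw [(hg (p⁻¹ w)).1, perm_apply_inv_self]
    rw [← h1, perm_inv_apply_self]
  · have h1 : g (true :: q⁻¹ w) = true :: w := by
      rw [(hg (q⁻¹ w)).2, perm_apply_inv_self]
    rw [← h1, perm_inv_apply_self]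

theorem isS_inv {g p q : P} (hg : isS g p q) : isS g⁻¹ q⁻¹ p⁻¹ := by
  intro w
  constructor
  · have h1 : g (true :: q⁻¹ w) = false :: w := by
      rw [(hg (q⁻¹ w)).2, perm_apply_inv_self]
    rw [← h1, perm_inv_apply_self]
  · have h1 : g (false :: p⁻¹ w) = true :: w := by
      rw [(hg (p⁻¹ w)).1, perm_apply_inv_self]
    rw [← h1, perm_inv_apply_self]

theorem isG_aP : isG aP 1 bP := by
  intro w
  constructor
  · show aF (false :: w) = _; rw [aF]; rfl
  · show aF (true :: w) = _; rw [aF]; rfl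

theorem isS_bP : isS bP aP 1 := by
  intro w
  constructor
  · show bF (false :: w) = _; rw [bF]; rfl
  · show bF (true :: w) = _; rw [bF]; rfl

theorem isG_unique {g p q p' q' : P} (h1 : isG g p q) (h2 : isG g p' q') :
    p = p' ∧ q = q' := by
  constructor
  · apply Equiv.ext; intro w
    have := (h1 w).1.symm.trans (h2 w).1
    simpa using this
  · apply Equiv.ext; intro w
    have := (h1 w).2.symm.trans (h2 w).2
    simpa using this

theorem isG_isS_false {g p q r s : P} (h1 : isG g p q) (h2 : isS g r s) : False := by
  have := (h1 []).1.symm.trans (h2 []).1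
  simp at this

theorem isG_eq_one {g : P} (h : isG g 1 1) (hnil : g [] = []) : g = 1 := by
  apply Equiv.ext; intro w
  match w with
  | [] => simpa using hnil
  | false :: w => simpa using (h w).1
  | true :: w => simpa using (h w).2

/-- The subgroup of permutations fixing the empty word. -/
def fixNil : Subgroup P where
  carrier := {g | g [] = []}
  one_mem' := by simp
  mul_mem' := by
    intro a b ha hb
    simp only [Set.mem_setOf_eq] at *
    simp [Equiv.Perm.mul_apply, hb, ha]
  inv_mem' := by
    intro a ha
    simp only [Set.mem_setOf_eq] at *
    conv_lhs => rw [← ha]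
    simp

theorem B_le_fixNil : 𝓑 ≤ fixNil := by
  rw [BasilicaGroup, closure_le]
  rintro x (rfl | rfl) <;> rfl

theorem fixNil_of_mem {g : P} (hg : g ∈ 𝓑) : g [] = [] := B_le_fixNil hg

theorem aP_mem : aP ∈ 𝓑 := subset_closure (by simp)

theorem bP_mem : bP ∈ 𝓑 := subset_closure (by simp)

end Aux
section Aux2

open Subgroup

local notation "P" => Perm (List Bool)
local notation "𝓑" => BasilicaGroup

theorem DB_le_B : ⁅𝓑, 𝓑⁆ ≤ 𝓑 :=
  Subgroup.commutator_le.mpr fun g hg h hh =>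
    mul_mem (mul_mem (mul_mem hg hh) (inv_mem hg)) (inv_mem hh)

theorem G3_le_B : ⁅(⁅𝓑, 𝓑⁆ : Subgroup P), 𝓑⁆ ≤ 𝓑 :=
  Subgroup.commutator_le.mpr fun g hg h hh =>
    mul_mem (mul_mem (mul_mem (DB_le_B hg) hh) (inv_mem (DB_le_B hg))) (inv_mem hh)

theorem DD_le_D : ⁅(⁅𝓑, 𝓑⁆ : Subgroup P), ⁅𝓑, 𝓑⁆⁆ ≤ ⁅𝓑, 𝓑⁆ :=
  Subgroup.commutator_le.mpr fun g hg h hh =>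
    mul_mem (mul_mem (mul_mem hg hh) (inv_mem hg)) (inv_mem hh)

theorem map_top_B : Subgroup.map (BasilicaGroup).subtype ⊤ = 𝓑 := by
  rw [← MonoidHom.range_eq_map, Subgroup.range_subtype]

theorem mapD : Subgroup.map (BasilicaGroup).subtype (commutator ↥𝓑) = ⁅𝓑, 𝓑⁆ := by
  rw [commutator_def, Subgroup.map_commutator, map_top_B]

theorem mapG3 :
    Subgroup.map (BasilicaGroup).subtype ⁅commutator ↥𝓑, ⊤⁆ = ⁅(⁅𝓑, 𝓑⁆ : Subgroup P), 𝓑⁆ := by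
  rw [Subgroup.map_commutator, mapD, map_top_B]

theorem mapD2 :
    Subgroup.map (BasilicaGroup).subtype ⁅commutator ↥𝓑, commutator ↥𝓑⁆ =
      ⁅(⁅𝓑, 𝓑⁆ : Subgroup P), ⁅𝓑, 𝓑⁆⁆ := by
  rw [Subgroup.map_commutator, mapD]

theorem conj_mem_map {K : Subgroup ↥𝓑} [K.Normal] {t x : P} (ht : t ∈ 𝓑)
    (hx : x ∈ Subgroup.map (BasilicaGroup).subtype K) :
    t * x * t⁻¹ ∈ Subgroup.map (BasilicaGroup).subtype K := by
  obtain ⟨y, hy, rfl⟩ := hx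
  exact ⟨⟨t, ht⟩ * y * ⟨t, ht⟩⁻¹, Subgroup.Normal.conj_mem ‹_› y hy ⟨t, ht⟩, rfl⟩

theorem mem_of_map {K : Subgroup ↥𝓑} {x : P} (hx' : x ∈ 𝓑)
    (hx : x ∈ Subgroup.map (BasilicaGroup).subtype K) : (⟨x, hx'⟩ : ↥𝓑) ∈ K := by
  obtain ⟨y, hy, h⟩ := hx
  have : y = ⟨x, hx'⟩ := Subtype.ext h
  exact this ▸ hy

theorem conjD {t x : P} (ht : t ∈ 𝓑) (hx : x ∈ ⁅𝓑, 𝓑⁆) : t * x * t⁻¹ ∈ ⁅𝓑, 𝓑⁆ := by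
  rw [← mapD] at hx ⊢; exact conj_mem_map ht hx

theorem conjG3 {t x : P} (ht : t ∈ 𝓑) (hx : x ∈ ⁅(⁅𝓑, 𝓑⁆ : Subgroup P), 𝓑⁆) :
    t * x * t⁻¹ ∈ ⁅(⁅𝓑, 𝓑⁆ : Subgroup P), 𝓑⁆ := by
  rw [← mapG3] at hx ⊢; exact conj_mem_map ht hx

theorem G3_le_D : ⁅(⁅𝓑, 𝓑⁆ : Subgroup P), 𝓑⁆ ≤ ⁅𝓑, 𝓑⁆ :=
  Subgroup.commutator_le.mpr fun g hg h hh => by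
    have e : ⁅g, h⁆ = g * (h * g⁻¹ * h⁻¹) := by rw [commutatorElement_def]; group
    rw [e]
    exact mul_mem hg (conjD hh (inv_mem hg))

theorem conjD2 {t x : P} (ht : t ∈ 𝓑) (hx : x ∈ ⁅(⁅𝓑, 𝓑⁆ : Subgroup P), ⁅𝓑, 𝓑⁆⁆) :
    t * x * t⁻¹ ∈ ⁅(⁅𝓑, 𝓑⁆ : Subgroup P), ⁅𝓑, 𝓑⁆⁆ := by
  rw [← mapD2] at hx ⊢; exact conj_mem_map ht hx

/-- The class of an element of `𝓑` in the abelianization. -/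
noncomputable def clsB (x : ↥𝓑) : Abelianization ↥𝓑 := Abelianization.of x

theorem clsB_eq_one_iff (x : ↥𝓑) : clsB x = 1 ↔ (x : P) ∈ ⁅𝓑, 𝓑⁆ := by
  rw [← mapD]
  constructor
  · intro h
    exact Subgroup.mem_map_of_mem _ ((QuotientGroup.eq_one_iff x).mp h)
  · intro h
    exact (QuotientGroup.eq_one_iff x).mpr (mem_of_map x.2 h)

theorem clsB_mul (x y : ↥𝓑) : clsB (x * y) = clsB x * clsB y := map_mul _ _ _

theorem clsB_inv (x : ↥𝓑) : clsB x⁻¹ = (clsB x)⁻¹ := map_inv _ _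

theorem clsB_one : clsB 1 = 1 := map_one _

end Aux2
section Aux3

open Subgroup

local notation "P" => Perm (List Bool)
local notation "𝓑" => BasilicaGroup

/-- `a` as an element of the Basilica group. -/
def aB : ↥𝓑 := ⟨aP, aP_mem⟩
/-- `b` as an element of the Basilica group. -/
def bB : ↥𝓑 := ⟨bP, bP_mem⟩

/-- The abelianization of the Basilica group, written additively. -/
noncomputable def clsA (x : ↥𝓑) : Additive (Abelianization ↥𝓑) :=
  Additive.ofMul (Abelianization.of x)

noncomputable def alA : Additive (Abelianization ↥𝓑) := clsA aB
noncomputable def beA : Additive (Abelianization ↥𝓑) := clsA bB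

theorem clsA_mul (x y : ↥𝓑) : clsA (x * y) = clsA x + clsA y := by
  unfold clsA; rw [map_mul]; rfl

theorem clsA_inv (x : ↥𝓑) : clsA x⁻¹ = -clsA x := by
  unfold clsA; rw [map_inv]; rfl

theorem clsA_one : clsA 1 = 0 := by unfold clsA; rw [map_one]; rfl

theorem clsA_zpow (x : ↥𝓑) (n : ℤ) : clsA (x ^ n) = n • clsA x := by
  unfold clsA; rw [map_zpow]; rfl

theorem memD_of_clsA_eq_zero {z : ↥𝓑} (h : clsA z = 0) : (z : P) ∈ ⁅𝓑, 𝓑⁆ := by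
  have h1 : Abelianization.of z = 1 := h
  rw [← mapD]
  exact Subgroup.mem_map_of_mem _ ((QuotientGroup.eq_one_iff z).mp h1)

theorem clsA_eq_zero_of_memD {z : ↥𝓑} (h : (z : P) ∈ ⁅𝓑, 𝓑⁆) : clsA z = 0 := by
  have : z ∈ commutator ↥𝓑 := mem_of_map z.2 (mapD ▸ h)
  have h1 : Abelianization.of z = 1 := (QuotientGroup.eq_one_iff z).mpr this
  calc clsA z = Additive.ofMul (Abelianization.of z) := rfl
  _ = 0 := by rw [h1]; rfl

/-- The structural invariant carried along the Basilica group. -/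
def GoodG (g : P) : Prop :=
  ∃ p q : ↥𝓑, isG g ↑p ↑q ∧ ∃ n : ℤ, clsA p = n • beA + clsA q

def GoodS (g : P) : Prop :=
  ∃ p q : ↥𝓑, isS g ↑p ↑q ∧ ∃ n : ℤ, clsA p = alA + n • beA + clsA q

theorem good_of_mem : ∀ {g : P}, g ∈ 𝓑 → GoodG g ∨ GoodS g := by
  intro g hg
  have hg' : g ∈ closure {aP, bP} := hg
  clear hg
  induction hg' using Subgroup.closure_induction with
  | mem x hx =>
    rcases hx with rfl | rfl
    · -- a
      left
      refine ⟨1, bB, ?_, -1, ?_⟩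
      · exact isG_aP
      · rw [clsA_one]; show (0 : Additive (Abelianization ↥𝓑)) = -1 • beA + beA; abel
    · -- b
      right
      refine ⟨aB, 1, ?_, 0, ?_⟩
      · exact isS_bP
      · rw [clsA_one]; show clsA aB = alA + (0 : ℤ) • beA + 0; rw [alA]; abel
  | one =>
    left
    exact ⟨1, 1, by simpa using isG_one, 0, by abel⟩
  | mul x y hx hy ihx ihy =>
    rcases ihx with ⟨p, q, hpq, n, hn⟩ | ⟨p, q, hpq, n, hn⟩ <;>
      rcases ihy with ⟨r, s, hrs, m, hm⟩ | ⟨r, s, hrs, m, hm⟩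
    · left
      refine ⟨p * r, q * s, isG_mul hpq hrs, n + m, ?_⟩
      rw [clsA_mul, clsA_mul, hn, hm, add_smul]; abel
    · right
      refine ⟨q * r, p * s, isG_mul_isS hpq hrs, m - n, ?_⟩
      rw [clsA_mul, clsA_mul, hm, hn, sub_smul]; abel
    · right
      refine ⟨p * r, q * s, isS_mul_isG hpq hrs, n + m, ?_⟩
      rw [clsA_mul, clsA_mul, hn, hm, add_smul]; abel
    · left
      refine ⟨q * r, p * s, isS_mul_isS hpq hrs, m - n, ?_⟩
      rw [clsA_mul, clsA_mul, hm, hn, sub_smul]; abel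
  | inv x hx ihx =>
    rcases ihx with ⟨p, q, hpq, n, hn⟩ | ⟨p, q, hpq, n, hn⟩
    · left
      refine ⟨p⁻¹, q⁻¹, isG_inv hpq, -n, ?_⟩
      rw [clsA_inv, clsA_inv, hn, neg_smul]; abel
    · right
      refine ⟨q⁻¹, p⁻¹, isS_inv hpq, n, ?_⟩
      rw [clsA_inv, clsA_inv, hn]; abel

end Aux3
section Aux4

open Subgroup

local notation "P" => Perm (List Bool)
local notation "𝓑" => BasilicaGroup

/-- Elements of the first-level stabiliser whose sections have abelianized classes
`(n•b, -n•b)`. -/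
def VV : Subgroup P where
  carrier := {g | ∃ (p q : ↥𝓑) (n : ℤ), isG g ↑p ↑q ∧ clsA p = n • beA ∧ clsA q = -n • beA}
  one_mem' := ⟨1, 1, 0, by simpa using isG_one, by rw [clsA_one, zero_smul],
    by rw [clsA_one, neg_zero, zero_smul]⟩
  mul_mem' := by
    rintro g h ⟨p, q, n, hpq, hp, hq⟩ ⟨r, s, m, hrs, hr, hs⟩
    refine ⟨p * r, q * s, n + m, isG_mul hpq hrs, ?_, ?_⟩
    · rw [clsA_mul, hp, hr, add_smul]
    · rw [clsA_mul, hq, hs, neg_add, add_smul, neg_smul, neg_smul]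
  inv_mem' := by
    rintro g ⟨p, q, n, hpq, hp, hq⟩
    refine ⟨p⁻¹, q⁻¹, -n, isG_inv hpq, ?_, ?_⟩
    · rw [clsA_inv, hp, neg_smul]
    · rw [clsA_inv, hq, neg_neg, neg_smul, neg_neg]

theorem D_le_VV : ⁅𝓑, 𝓑⁆ ≤ VV := by
  rw [Subgroup.commutator_le]
  intro g hg h hh
  have e : ⁅g, h⁆ = g * h * g⁻¹ * h⁻¹ := commutatorElement_def g h
  rw [e]
  rcases good_of_mem hg with ⟨p, q, hpq, n, hn⟩ | ⟨p, q, hpq, n, hn⟩ <;>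
    rcases good_of_mem hh with ⟨r, s, hrs, m, hm⟩ | ⟨r, s, hrs, m, hm⟩
  · -- Γ Γ
    have u3 := isG_mul (isG_mul (isG_mul hpq hrs) (isG_inv hpq)) (isG_inv hrs)
    refine ⟨p * r * p⁻¹ * r⁻¹, q * s * q⁻¹ * s⁻¹, 0, u3, ?_, ?_⟩ <;>
    · simp only [clsA_mul, clsA_inv, zero_smul, neg_zero]
      abel
  · -- Γ Σ
    have u3 := isS_mul_isS (isS_mul_isG (isG_mul_isS hpq hrs) (isG_inv hpq)) (isS_inv hrs)
    refine ⟨p * s * q⁻¹ * s⁻¹, q * r * p⁻¹ * r⁻¹, n, u3, ?_, ?_⟩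
    · simp only [clsA_mul, clsA_inv, hn]; abel
    · simp only [clsA_mul, clsA_inv, hn, neg_smul]; abel
  · -- Σ Γ
    have u3 := isG_mul (isS_mul_isS (isS_mul_isG hpq hrs) (isS_inv hpq)) (isG_inv hrs)
    refine ⟨q * s * q⁻¹ * r⁻¹, p * r * p⁻¹ * s⁻¹, -m, u3, ?_, ?_⟩
    · simp only [clsA_mul, clsA_inv, hm, neg_smul]; abel
    · simp only [clsA_mul, clsA_inv, hm, neg_neg, neg_smul]; abel
  · -- Σ Σ
    have u3 := isS_mul_isS (isG_mul_isS (isS_mul_isS hpq hrs) (isS_inv hpq)) (isS_inv hrs)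
    refine ⟨q * r * p⁻¹ * s⁻¹, p * s * q⁻¹ * r⁻¹, m - n, u3, ?_, ?_⟩
    · simp only [clsA_mul, clsA_inv, hn, hm, sub_smul]; abel
    · simp only [clsA_mul, clsA_inv, hn, hm, neg_smul, sub_smul]; abel

theorem beA_def : clsA bB = beA := rfl

theorem coe_bB_zpow (n : ℤ) : ((bB ^ n : ↥𝓑) : P) = bP ^ n := by
  rw [SubgroupClass.coe_zpow]; rfl

theorem sections_of_D {u : P} (hu : u ∈ ⁅𝓑, 𝓑⁆) :
    ∃ (x y : P) (i : ℤ), isG u (bP ^ i * x) (bP ^ (-i) * y) ∧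
      x ∈ ⁅𝓑, 𝓑⁆ ∧ y ∈ ⁅𝓑, 𝓑⁆ := by
  obtain ⟨p, q, n, hpq, hp, hq⟩ := D_le_VV hu
  have e1 : (((bB ^ n)⁻¹ * p : ↥𝓑) : P) = bP ^ (-n) * ↑p := by
    rw [Subgroup.coe_mul, InvMemClass.coe_inv, coe_bB_zpow, zpow_neg]
  have e2 : (((bB ^ (-n))⁻¹ * q : ↥𝓑) : P) = bP ^ n * ↑q := by
    rw [Subgroup.coe_mul, InvMemClass.coe_inv, coe_bB_zpow]; group
  refine ⟨bP ^ (-n) * ↑p, bP ^ n * ↑q, n, ?_, ?_, ?_⟩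
  · have f1 : bP ^ n * (bP ^ (-n) * (↑p : P)) = ↑p := by group
    have f2 : bP ^ (-n) * (bP ^ n * (↑q : P)) = ↑q := by group
    rw [f1, f2]; exact hpq
  · rw [← e1]
    apply memD_of_clsA_eq_zero
    rw [clsA_mul, clsA_inv, clsA_zpow, hp, beA_def]; abel
  · rw [← e2]
    apply memD_of_clsA_eq_zero
    rw [clsA_mul, clsA_inv, clsA_zpow, hq, beA_def]; abel

end Aux4
section Aux5

open Subgroup

local notation "P" => Perm (List Bool)
local notation "𝓑" => BasilicaGroup

theorem comm_id1 {G : Type*} [Group G] (g x h : G) :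
    ⁅g * x, h⁆ = g * ⁅x, h⁆ * g⁻¹ * ⁅g, h⁆ := by
  simp only [commutatorElement_def]; group

theorem comm_id2 {G : Type*} [Group G] (g h y : G) :
    ⁅g, h * y⁆ = ⁅g, h⁆ * (h * ⁅g, y⁆ * h⁻¹) := by
  simp only [commutatorElement_def]; group

theorem comm_inv_left {G : Type*} [Group G] (x h : G) :
    ⁅x⁻¹, h⁆ = x⁻¹ * ⁅x, h⁆⁻¹ * x := by
  simp only [commutatorElement_def]; group

theorem comm_inv_right {G : Type*} [Group G] (g h : G) :
    ⁅g, h⁻¹⁆ = h⁻¹ * ⁅g, h⁆⁻¹ * h := by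
  simp only [commutatorElement_def]; group

theorem CL {x y : P} (hx : x ∈ ⁅𝓑, 𝓑⁆) (hy : y ∈ ⁅𝓑, 𝓑⁆) (i j : ℤ) :
    ⁅bP ^ i * x, bP ^ j * y⁆ ∈ ⁅(⁅𝓑, 𝓑⁆ : Subgroup P), 𝓑⁆ := by
  rw [comm_id1]
  have hbi : (bP ^ i : P) ∈ 𝓑 := zpow_mem bP_mem i
  have hbj : (bP ^ j : P) ∈ 𝓑 := zpow_mem bP_mem j
  have t1 : ⁅x, bP ^ j * y⁆ ∈ ⁅(⁅𝓑, 𝓑⁆ : Subgroup P), 𝓑⁆ :=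
    Subgroup.commutator_mem_commutator hx (mul_mem hbj (DB_le_B hy))
  have t1' : bP ^ i * ⁅x, bP ^ j * y⁆ * (bP ^ i)⁻¹ ∈ ⁅(⁅𝓑, 𝓑⁆ : Subgroup P), 𝓑⁆ :=
    conjG3 hbi t1
  have t2 : ⁅bP ^ i, bP ^ j * y⁆ ∈ ⁅(⁅𝓑, 𝓑⁆ : Subgroup P), 𝓑⁆ := by
    rw [comm_id2]
    have hzz : ⁅bP ^ i, bP ^ j⁆ = 1 :=
      commutatorElement_eq_one_iff_commute.mpr ((Commute.refl bP).zpow_zpow i j)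
    rw [hzz, one_mul]
    have t3 : ⁅bP ^ i, y⁆ ∈ ⁅(⁅𝓑, 𝓑⁆ : Subgroup P), 𝓑⁆ := by
      rw [Subgroup.commutator_comm]
      exact Subgroup.commutator_mem_commutator hbi hy
    exact conjG3 hbj t3
  exact mul_mem t1' t2

/-- Elements with both sections in `γ₃`. -/
def V2 : Subgroup P where
  carrier := {g | ∃ p q : P, isG g p q ∧ p ∈ ⁅(⁅𝓑, 𝓑⁆ : Subgroup P), 𝓑⁆ ∧
    q ∈ ⁅(⁅𝓑, 𝓑⁆ : Subgroup P), 𝓑⁆}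
  one_mem' := ⟨1, 1, isG_one, one_mem _, one_mem _⟩
  mul_mem' := by
    rintro g h ⟨p, q, hpq, hp, hq⟩ ⟨r, s, hrs, hr, hs⟩
    exact ⟨p * r, q * s, isG_mul hpq hrs, mul_mem hp hr, mul_mem hq hs⟩
  inv_mem' := by
    rintro g ⟨p, q, hpq, hp, hq⟩
    exact ⟨p⁻¹, q⁻¹, isG_inv hpq, inv_mem hp, inv_mem hq⟩

theorem D2_le_V2 : ⁅(⁅𝓑, 𝓑⁆ : Subgroup P), ⁅𝓑, 𝓑⁆⁆ ≤ V2 := by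
  rw [Subgroup.commutator_le]
  intro u hu v hv
  obtain ⟨x, y, i, hu', hx, hy⟩ := sections_of_D hu
  obtain ⟨z, w, j, hv', hz, hw⟩ := sections_of_D hv
  have u3 := isG_mul (isG_mul (isG_mul hu' hv') (isG_inv hu')) (isG_inv hv')
  rw [show ⁅u, v⁆ = u * v * u⁻¹ * v⁻¹ from commutatorElement_def u v]
  refine ⟨_, _, u3, ?_, ?_⟩
  · rw [show bP ^ i * x * (bP ^ j * z) * (bP ^ i * x)⁻¹ * (bP ^ j * z)⁻¹ =
      ⁅bP ^ i * x, bP ^ j * z⁆ from (commutatorElement_def _ _).symm]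
    exact CL hx hz i j
  · rw [show bP ^ (-i) * y * (bP ^ (-j) * w) * (bP ^ (-i) * y)⁻¹ * (bP ^ (-j) * w)⁻¹ =
      ⁅bP ^ (-i) * y, bP ^ (-j) * w⁆ from (commutatorElement_def _ _).symm]
    exact CL hy hw (-i) (-j)

theorem D2_fix {g : P} (hg : g ∈ ⁅(⁅𝓑, 𝓑⁆ : Subgroup P), ⁅𝓑, 𝓑⁆⁆) (x : Bool) :
    g [x] = [x] := by
  obtain ⟨p, q, hpq, hp, hq⟩ := D2_le_V2 hg
  cases x
  · have := (hpq []).1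
    rw [fixNil_of_mem (G3_le_B hp)] at this
    exact this
  · have := (hpq []).2
    rw [fixNil_of_mem (G3_le_B hq)] at this
    exact this

end Aux5
section Aux6

open Subgroup

local notation "P" => Perm (List Bool)
local notation "𝓑" => BasilicaGroup

theorem comm_id5 {G : Type*} [Group G] (x b : G) :
    ⁅x, b⁆ = b * (x * ⁅x⁻¹, b⁻¹⁆ * x⁻¹) * b⁻¹ := by
  simp only [commutatorElement_def]; group

/-- Generic fact: a subgroup closed under conjugation by `𝓑` and containing `⁅a,b⁆`
contains all commutators of elements of `𝓑`. -/
theorem commutators_mem_of_conj {N : Subgroup P}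
    (hconj : ∀ t ∈ 𝓑, ∀ x ∈ N, t * x * t⁻¹ ∈ N)
    (hab : ⁅aP, bP⁆ ∈ N) : ∀ g ∈ 𝓑, ∀ h ∈ 𝓑, ⁅g, h⁆ ∈ N := by
  have hconj' : ∀ t ∈ 𝓑, ∀ x ∈ N, t⁻¹ * x * t ∈ N := by
    intro t ht x hx
    have := hconj t⁻¹ (inv_mem ht) x hx
    rwa [inv_inv] at this
  have base : ∀ g ∈ ({aP, bP} : Set P), ∀ h ∈ 𝓑, ⁅g, h⁆ ∈ N := by
    intro g hgset h hh
    have hgB : g ∈ 𝓑 := subset_closure hgset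
    have hh' : h ∈ closure {aP, bP} := hh
    clear hh
    induction hh' using Subgroup.closure_induction with
    | mem y hy =>
      rcases hgset with rfl | rfl <;> rcases hy with rfl | rfl
      · rw [commutatorElement_eq_one_iff_commute.mpr (Commute.refl _)]; exact one_mem N
      · exact hab
      · rw [← commutatorElement_inv]; exact inv_mem hab
      · rw [commutatorElement_eq_one_iff_commute.mpr (Commute.refl _)]; exact one_mem N
    | one =>
      rw [commutatorElement_eq_one_iff_commute.mpr (Commute.one_right _)]; exact one_mem N
    | mul y z hy hz ihy ihz =>
      rw [comm_id2]
      exact mul_mem ihy (hconj y hy _ ihz)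
    | inv y hy ihy =>
      rw [comm_inv_right]
      exact hconj' y hy _ (inv_mem ihy)
  intro g hg
  have hg' : g ∈ closure {aP, bP} := hg
  clear hg
  induction hg' using Subgroup.closure_induction with
  | mem x hx => exact base x hx
  | one =>
    intro h hh
    rw [commutatorElement_eq_one_iff_commute.mpr (Commute.one_left _)]; exact one_mem N
  | mul x y hx hy ihx ihy =>
    intro h hh
    rw [comm_id1]
    exact mul_mem (hconj x hx _ (ihy h hh)) (ihx h hh)
  | inv x hx ihx =>
    intro h hh
    rw [comm_inv_left]
    exact hconj' x hx _ (inv_mem (ihx h hh))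

theorem conjB_sec {g p q : P} (h : isG g p q) : isG (bP⁻¹ * g * bP) (aP⁻¹ * q * aP) p := by
  have h1 := isS_mul_isS (isS_inv isS_bP) (isG_mul_isS h isS_bP)
  simpa only [mul_assoc, inv_one, one_mul, mul_one] using h1

/-- The first-level-stabilising elements of `𝓑` surject (in the first section) onto `𝓑`. -/
def CC : Subgroup P where
  carrier := {y | ∃ t s : P, t ∈ 𝓑 ∧ isG t y s}
  one_mem' := ⟨1, 1, one_mem _, isG_one⟩
  mul_mem' := by
    rintro y y' ⟨t, s, ht, hts⟩ ⟨t', s', ht', hts'⟩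
    exact ⟨t * t', s * s', mul_mem ht ht', isG_mul hts hts'⟩
  inv_mem' := by
    rintro y ⟨t, s, ht, hts⟩
    exact ⟨t⁻¹, s⁻¹, inv_mem ht, isG_inv hts⟩

theorem aP_mem_CC : aP ∈ CC := by
  have h := isS_mul_isS isS_bP isS_bP
  exact ⟨bP * bP, aP, mul_mem bP_mem bP_mem, by simpa only [one_mul, mul_one] using h⟩

theorem abA_mem_CC : aP⁻¹ * bP * aP ∈ CC := by
  have h := conjB_sec isG_aP
  exact ⟨bP⁻¹ * aP * bP, 1, mul_mem (mul_mem (inv_mem bP_mem) aP_mem) bP_mem, h⟩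

theorem B_le_CC : 𝓑 ≤ CC := by
  rw [BasilicaGroup, closure_le]
  rintro x (rfl | rfl)
  · exact aP_mem_CC
  · have e : bP = aP * (aP⁻¹ * bP * aP) * aP⁻¹ := by group
    rw [e]
    exact mul_mem (mul_mem aP_mem_CC abA_mem_CC) (inv_mem aP_mem_CC)

/-- Elements arising as a first section of an element of `K` with trivial second section. -/
def leftSec (K : Subgroup P) : Subgroup P where
  carrier := {x | ∃ g ∈ K, isG g x 1}
  one_mem' := ⟨1, one_mem K, isG_one⟩
  mul_mem' := by
    rintro x x' ⟨g, hg, h⟩ ⟨g', hg', h'⟩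
    exact ⟨g * g', mul_mem hg hg', by simpa only [one_mul] using isG_mul h h'⟩
  inv_mem' := by
    rintro x ⟨g, hg, h⟩
    exact ⟨g⁻¹, inv_mem hg, by simpa only [inv_one] using isG_inv h⟩

theorem leftSec_conj {K : Subgroup P} (conjK : ∀ t ∈ 𝓑, ∀ g ∈ K, t * g * t⁻¹ ∈ K) :
    ∀ y ∈ 𝓑, ∀ x ∈ leftSec K, y * x * y⁻¹ ∈ leftSec K := by
  rintro y hy x ⟨g, hg, hsec⟩
  obtain ⟨t, s, ht, hts⟩ := B_le_CC hy
  refine ⟨t * g * t⁻¹, conjK t ht g hg, ?_⟩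
  have h1 := isG_mul (isG_mul hts hsec) (isG_inv hts)
  simpa only [mul_one, mul_inv_cancel, mul_inv_cancel_right] using h1

theorem leftSec_conj' {K : Subgroup P} (conjK : ∀ t ∈ 𝓑, ∀ g ∈ K, t * g * t⁻¹ ∈ K) :
    ∀ y ∈ 𝓑, ∀ x ∈ leftSec K, y⁻¹ * x * y ∈ leftSec K := by
  intro y hy x hx
  have := leftSec_conj conjK y⁻¹ (inv_mem hy) x hx
  rwa [inv_inv] at this

theorem leftSec_to_right {K : Subgroup P} (conjK : ∀ t ∈ 𝓑, ∀ g ∈ K, t * g * t⁻¹ ∈ K)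
    {x : P} (hx : x ∈ leftSec K) : ∃ g ∈ K, isG g 1 x := by
  obtain ⟨g, hg, hsec⟩ := hx
  have h1 := conjB_sec hsec
  refine ⟨bP⁻¹ * g * bP, ?_, by simpa only [mul_one, one_mul, mul_inv_cancel,
    mul_inv_cancel_right, inv_mul_cancel, inv_mul_cancel_left] using h1⟩
  have := conjK bP⁻¹ (inv_mem bP_mem) g hg
  rwa [inv_inv] at this

end Aux6
section Aux7

open Subgroup

local notation "P" => Perm (List Bool)
local notation "𝓑" => BasilicaGroup

/-- The commutator `c₀ = ⁅a,b⁆`. -/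
noncomputable def c0 : P := ⁅aP, bP⁆

theorem c0_mem_B : c0 ∈ 𝓑 :=
  mul_mem (mul_mem (mul_mem aP_mem bP_mem) (inv_mem aP_mem)) (inv_mem bP_mem)

theorem c0_mem_D : c0 ∈ ⁅𝓑, 𝓑⁆ := Subgroup.commutator_mem_commutator aP_mem bP_mem

theorem isG_c0 : isG c0 bP⁻¹ bP := by
  have s1 := isG_mul_isS isG_aP isS_bP
  have s2 := isS_mul_isG s1 (isG_inv isG_aP)
  have s3 := isS_mul_isS s2 (isS_inv isS_bP)
  rw [show c0 = aP * bP * aP⁻¹ * bP⁻¹ from commutatorElement_def aP bP]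
  simpa only [one_mul, mul_one, inv_one, mul_inv_cancel_right] using s3

theorem isG_bb : isG (bP * bP) aP aP := by
  simpa only [one_mul, mul_one] using isS_mul_isS isS_bP isS_bP

theorem isG_s0 : isG ⁅aP, bP * bP⁆ 1 ⁅bP, aP⁆ := by
  have u3 := isG_mul (isG_mul (isG_mul isG_aP isG_bb) (isG_inv isG_aP)) (isG_inv isG_bb)
  rw [show ⁅aP, bP * bP⁆ = aP * (bP * bP) * aP⁻¹ * (bP * bP)⁻¹ from commutatorElement_def _ _,
    show ⁅bP, aP⁆ = bP * aP * bP⁻¹ * aP⁻¹ from commutatorElement_def _ _]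
  simpa only [one_mul, mul_one, inv_one, mul_inv_cancel, mul_inv_cancel_right] using u3

theorem commute_c0_aP : Commute c0 aP := by
  rw [← commutatorElement_eq_one_iff_commute]
  have u3 := isG_mul (isG_mul (isG_mul isG_c0 isG_aP) (isG_inv isG_c0)) (isG_inv isG_aP)
  have hsec : isG (c0 * aP * c0⁻¹ * aP⁻¹) 1 1 := by
    simpa only [one_mul, mul_one, inv_one, mul_inv_cancel, mul_inv_cancel_right, inv_inv,
      inv_mul_cancel_right, inv_mul_cancel] using u3
  have hmem : c0 * aP * c0⁻¹ * aP⁻¹ ∈ 𝓑 :=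
    mul_mem (mul_mem (mul_mem c0_mem_B aP_mem) (inv_mem c0_mem_B)) (inv_mem aP_mem)
  rw [show ⁅c0, aP⁆ = c0 * aP * c0⁻¹ * aP⁻¹ from commutatorElement_def _ _]
  exact isG_eq_one hsec (fixNil_of_mem hmem)

/-- `B' ≤ leftSec ⁅𝓑,𝓑⁆`: every element of the derived subgroup appears as `(x,1)`-section
pair of an element of the derived subgroup. -/
theorem D_le_leftSec_D : ⁅𝓑, 𝓑⁆ ≤ leftSec ⁅𝓑, 𝓑⁆ := by
  have conjK : ∀ t ∈ 𝓑, ∀ g ∈ (⁅𝓑, 𝓑⁆ : Subgroup P), t * g * t⁻¹ ∈ ⁅𝓑, 𝓑⁆ :=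
    fun t ht g hg => conjD ht hg
  -- the seed : ⁅bP, aP⁆ lies in leftSec ⁅𝓑,𝓑⁆
  have seed0 : aP⁻¹ * ⁅bP, aP⁆ * aP ∈ leftSec ⁅𝓑, 𝓑⁆ := by
    have hs0 : ⁅aP, bP * bP⁆ ∈ (⁅𝓑, 𝓑⁆ : Subgroup P) :=
      Subgroup.commutator_mem_commutator aP_mem (mul_mem bP_mem bP_mem)
    have h1 := conjB_sec isG_s0
    refine ⟨bP⁻¹ * ⁅aP, bP * bP⁆ * bP, ?_, by simpa only [mul_one, one_mul] using h1⟩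
    have := conjD (inv_mem bP_mem) hs0
    rwa [inv_inv] at this
  have seed1 : ⁅bP, aP⁆ ∈ leftSec ⁅𝓑, 𝓑⁆ := by
    have h2 := leftSec_conj conjK aP aP_mem _ seed0
    have e : aP * (aP⁻¹ * ⁅bP, aP⁆ * aP) * aP⁻¹ = ⁅bP, aP⁆ := by group
    rwa [e] at h2
  have seed : ⁅aP, bP⁆ ∈ leftSec ⁅𝓑, 𝓑⁆ := by
    rw [← commutatorElement_inv]; exact inv_mem seed1
  rw [Subgroup.commutator_le]
  exact fun g hg h hh => commutators_mem_of_conj (leftSec_conj conjK) seed g hg h hh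

theorem D_to_right {x : P} (hx : x ∈ (⁅𝓑, 𝓑⁆ : Subgroup P)) :
    ∃ g ∈ (⁅𝓑, 𝓑⁆ : Subgroup P), isG g 1 x :=
  leftSec_to_right (fun t ht g hg => conjD ht hg) (D_le_leftSec_D hx)

end Aux7
section Aux8

open Subgroup

local notation "P" => Perm (List Bool)
local notation "𝓑" => BasilicaGroup

/-- `NN` : first sections (paired with trivial second section) of elements of `𝓑''`. -/
noncomputable abbrev NN : Subgroup P := leftSec ⁅(⁅𝓑, 𝓑⁆ : Subgroup P), ⁅𝓑, 𝓑⁆⁆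

theorem conjK2 : ∀ t ∈ 𝓑, ∀ g ∈ (⁅(⁅𝓑, 𝓑⁆ : Subgroup P), ⁅𝓑, 𝓑⁆⁆ : Subgroup P),
    t * g * t⁻¹ ∈ ⁅(⁅𝓑, 𝓑⁆ : Subgroup P), ⁅𝓑, 𝓑⁆⁆ :=
  fun t ht g hg => conjD2 ht hg

theorem mkN_comm {x y : P} (hx : x ∈ (⁅𝓑, 𝓑⁆ : Subgroup P))
    (hy : y ∈ (⁅𝓑, 𝓑⁆ : Subgroup P)) : ⁅x, y⁆ ∈ NN := by
  obtain ⟨g, hg, hgs⟩ := D_le_leftSec_D hx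
  obtain ⟨h, hh, hhs⟩ := D_le_leftSec_D hy
  refine ⟨⁅g, h⁆, Subgroup.commutator_mem_commutator hg hh, ?_⟩
  have u3 := isG_mul (isG_mul (isG_mul hgs hhs) (isG_inv hgs)) (isG_inv hhs)
  rw [show ⁅g, h⁆ = g * h * g⁻¹ * h⁻¹ from commutatorElement_def _ _,
    show ⁅x, y⁆ = x * y * x⁻¹ * y⁻¹ from commutatorElement_def _ _]
  simpa only [one_mul, mul_one, inv_one, mul_inv_cancel, mul_inv_cancel_right] using u3

theorem mkN_binv {x : P} (hx : x ∈ (⁅𝓑, 𝓑⁆ : Subgroup P)) : ⁅x, bP⁻¹⁆ ∈ NN := by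
  obtain ⟨g, hg, hgs⟩ := D_le_leftSec_D hx
  refine ⟨⁅g, c0⁆, Subgroup.commutator_mem_commutator hg c0_mem_D, ?_⟩
  have u3 := isG_mul (isG_mul (isG_mul hgs isG_c0) (isG_inv hgs)) (isG_inv isG_c0)
  rw [show ⁅g, c0⁆ = g * c0 * g⁻¹ * c0⁻¹ from commutatorElement_def _ _,
    show ⁅x, bP⁻¹⁆ = x * bP⁻¹ * x⁻¹ * (bP⁻¹)⁻¹ from commutatorElement_def _ _]
  simpa only [one_mul, mul_one, inv_one, inv_inv, mul_inv_cancel,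
    mul_inv_cancel_right] using u3

theorem mkN_b {x : P} (hx : x ∈ (⁅𝓑, 𝓑⁆ : Subgroup P)) : ⁅x, bP⁆ ∈ NN := by
  rw [comm_id5 x bP]
  have h1 : ⁅x⁻¹, bP⁻¹⁆ ∈ NN := mkN_binv (inv_mem hx)
  have h2 : x * ⁅x⁻¹, bP⁻¹⁆ * x⁻¹ ∈ NN := leftSec_conj conjK2 x (DB_le_B hx) _ h1
  exact leftSec_conj conjK2 bP bP_mem _ h2

theorem W_lemma : ∀ w ∈ 𝓑, w⁻¹ * c0 * w * c0⁻¹ ∈ NN := by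
  intro w hw
  have hw' : w ∈ closure {aP, bP} := hw
  clear hw
  induction hw' using Subgroup.closure_induction with
  | mem y hy =>
    rcases hy with rfl | rfl
    · have hca : c0 * aP = aP * c0 := commute_c0_aP.eq
      have e : aP⁻¹ * c0 * aP * c0⁻¹ = 1 := by
        have h0 : aP⁻¹ * (c0 * aP) * c0⁻¹ = 1 := by rw [hca]; group
        rwa [← mul_assoc] at h0
      rw [e]; exact one_mem _
    · have e : bP⁻¹ * c0 * bP * c0⁻¹ = ⁅c0, bP⁻¹⁆⁻¹ := by
        simp only [commutatorElement_def]; group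
      rw [e]; exact inv_mem (mkN_binv c0_mem_D)
  | one =>
    have e : (1 : P)⁻¹ * c0 * 1 * c0⁻¹ = 1 := by group
    rw [e]; exact one_mem _
  | mul x y hx hy ihx ihy =>
    have e : (x * y)⁻¹ * c0 * (x * y) * c0⁻¹ =
        y⁻¹ * (x⁻¹ * c0 * x * c0⁻¹) * y * (y⁻¹ * c0 * y * c0⁻¹) := by group
    rw [e]
    exact mul_mem (leftSec_conj' conjK2 y hy _ ihx) ihy
  | inv x hx ihx =>
    have e : (x⁻¹)⁻¹ * c0 * x⁻¹ * c0⁻¹ = x * (x⁻¹ * c0 * x * c0⁻¹)⁻¹ * x⁻¹ := by group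
    rw [e]
    exact leftSec_conj conjK2 x hx _ (inv_mem ihx)

theorem conjNN_zpow (k : ℤ) {m : P} (hm : m ∈ NN) : c0 ^ k * m * c0 ^ (-k) ∈ NN := by
  have := leftSec_conj conjK2 (c0 ^ k) (zpow_mem c0_mem_B k) _ hm
  rwa [← zpow_neg] at this

theorem pow_shift {n : P} (hn : n ∈ NN) : ∀ k : ℤ, ∃ m ∈ NN, (n * c0) ^ k = m * c0 ^ k := by
  intro k
  induction k using Int.induction_on with
  | zero => exact ⟨1, one_mem _, by simp⟩
  | succ i ih =>
    obtain ⟨m, hm, e⟩ := ih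
    refine ⟨m * (c0 ^ (i : ℤ) * n * c0 ^ (-(i : ℤ))), mul_mem hm (conjNN_zpow _ hn), ?_⟩
    rw [zpow_add_one, e]
    group
  | pred i ih =>
    obtain ⟨m, hm, e⟩ := ih
    refine ⟨m * (c0 ^ (-(i : ℤ) - 1) * n⁻¹ * c0 ^ (-(-(i : ℤ) - 1))),
      mul_mem hm (conjNN_zpow _ (inv_mem hn)), ?_⟩
    rw [zpow_sub_one, e]
    group

theorem conj_zpow_c0 : ∀ w ∈ 𝓑, ∀ k : ℤ, ∃ m ∈ NN, w⁻¹ * c0 ^ k * w = m * c0 ^ k := by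
  intro w hw k
  have hn : w⁻¹ * c0 * w * c0⁻¹ ∈ NN := W_lemma w hw
  obtain ⟨m, hm, e⟩ := pow_shift hn k
  refine ⟨m, hm, ?_⟩
  have e1 : w⁻¹ * c0 * w * c0⁻¹ * c0 = w⁻¹ * c0 * w := by group
  have e2 : (w⁻¹ * c0 * w) ^ k = w⁻¹ * c0 ^ k * w := by
    have := conj_zpow (i := k) (a := w⁻¹) (b := c0)
    rwa [inv_inv] at this
  rw [← e2, ← e1, e]

/-- The subgroup `NN · ⟨c₀⟩`. -/
noncomputable def NC0 : Subgroup P where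
  carrier := {x | ∃ k : ℤ, ∃ m ∈ NN, x = m * c0 ^ k}
  one_mem' := ⟨0, 1, one_mem _, by simp⟩
  mul_mem' := by
    rintro x y ⟨k, m, hm, rfl⟩ ⟨l, m', hm', rfl⟩
    refine ⟨k + l, m * (c0 ^ k * m' * c0 ^ (-k)), mul_mem hm (conjNN_zpow _ hm'), ?_⟩
    group
  inv_mem' := by
    rintro x ⟨k, m, hm, rfl⟩
    refine ⟨-k, c0 ^ (-k) * m⁻¹ * c0 ^ (-(-k)), conjNN_zpow _ (inv_mem hm), ?_⟩
    group

theorem conj_NC0 : ∀ t ∈ 𝓑, ∀ x ∈ NC0, t * x * t⁻¹ ∈ NC0 := by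
  rintro t ht x ⟨k, m, hm, rfl⟩
  obtain ⟨m2, hm2, e2⟩ := conj_zpow_c0 t⁻¹ (inv_mem ht) k
  rw [inv_inv] at e2
  refine ⟨k, (t * m * t⁻¹) * m2, mul_mem (leftSec_conj conjK2 t ht _ hm) hm2, ?_⟩
  have : t * (m * c0 ^ k) * t⁻¹ = (t * m * t⁻¹) * (t * c0 ^ k * t⁻¹) := by group
  rw [this, e2]
  group

theorem D_le_NC0 : ⁅𝓑, 𝓑⁆ ≤ NC0 := by
  have seed : ⁅aP, bP⁆ ∈ NC0 := ⟨1, 1, one_mem _, by rw [zpow_one, one_mul]; rfl⟩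
  rw [Subgroup.commutator_le]
  exact fun g hg h hh => commutators_mem_of_conj conj_NC0 seed g hg h hh

theorem mkN_a {x : P} (hx : x ∈ (⁅𝓑, 𝓑⁆ : Subgroup P)) : ⁅x, aP⁆ ∈ NN := by
  obtain ⟨k, m, hm, rfl⟩ := D_le_NC0 hx
  have hcomm : c0 ^ k * aP = aP * c0 ^ k := ((commute_c0_aP).zpow_left k).eq
  have e2 : ⁅m * c0 ^ k, aP⁆ = m * (aP * m⁻¹ * aP⁻¹) := by
    rw [commutatorElement_def]
    rw [show m * c0 ^ k * aP = m * aP * c0 ^ k from by rw [mul_assoc, hcomm, ← mul_assoc]]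
    group
  rw [e2]
  exact mul_mem hm (leftSec_conj conjK2 aP aP_mem _ (inv_mem hm))

theorem mkN_all : ∀ g ∈ 𝓑, ∀ x ∈ (⁅𝓑, 𝓑⁆ : Subgroup P), ⁅x, g⁆ ∈ NN := by
  intro g hg
  have hg' : g ∈ closure {aP, bP} := hg
  clear hg
  induction hg' using Subgroup.closure_induction with
  | mem y hy =>
    intro x hx
    rcases hy with rfl | rfl
    · exact mkN_a hx
    · exact mkN_b hx
  | one =>
    intro x hx
    rw [commutatorElement_eq_one_iff_commute.mpr (Commute.one_right _)]; exact one_mem _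
  | mul y z hy hz ihy ihz =>
    intro x hx
    rw [comm_id2]
    exact mul_mem (ihy x hx) (leftSec_conj conjK2 y hy _ (ihz x hx))
  | inv y hy ihy =>
    intro x hx
    rw [comm_inv_right]
    exact leftSec_conj' conjK2 y hy _ (inv_mem (ihy x hx))

theorem G3_le_NN : ⁅(⁅𝓑, 𝓑⁆ : Subgroup P), 𝓑⁆ ≤ NN :=
  Subgroup.commutator_le.mpr fun x hx g hg => mkN_all g hg x hx

end Aux8
/-- `𝓑''` stabilises the first level of the binary tree, and
`ψ₁(𝓑'') = γ₃(𝓑) × γ₃(𝓑)`. -/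
theorem psi1_basilica_second_derived :
    (∀ g ∈ (⁅⁅BasilicaGroup, BasilicaGroup⁆, ⁅BasilicaGroup, BasilicaGroup⁆⁆ :
        Subgroup (Perm (List Bool))), ∀ x : Bool, g [x] = [x]) ∧
    psi1Image ⁅⁅BasilicaGroup, BasilicaGroup⁆, ⁅BasilicaGroup, BasilicaGroup⁆⁆ =
      Subgroup.prod ⁅⁅BasilicaGroup, BasilicaGroup⁆, BasilicaGroup⁆
        ⁅⁅BasilicaGroup, BasilicaGroup⁆, BasilicaGroup⁆ := by
  constructor
  · intro g hg x
    exact D2_fix hg x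
  · apply le_antisymm
    · rintro ⟨p1, p2⟩ hp
      obtain ⟨g, hg, hsec⟩ := hp
      have hsec' : isG g p1 p2 := hsec
      obtain ⟨r, s, hrs, hr, hs⟩ := D2_le_V2 hg
      obtain ⟨e1, e2⟩ := isG_unique hsec' hrs
      exact Subgroup.mem_prod.mpr ⟨e1.symm ▸ hr, e2.symm ▸ hs⟩
    · rintro ⟨p1, p2⟩ hp
      obtain ⟨h1, h2⟩ := Subgroup.mem_prod.mp hp
      obtain ⟨g1, hg1, hs1⟩ := G3_le_NN h1
      obtain ⟨g2, hg2, hs2⟩ := leftSec_to_right conjK2 (G3_le_NN h2)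
      refine ⟨g1 * g2, mul_mem hg1 hg2, ?_⟩
      have h3 : isG (g1 * g2) p1 p2 := by
        simpa only [mul_one, one_mul] using isG_mul hs1 hs2
      exact h3

end PaperDefs
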